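/- arXiv:1910.06531 — 6 statements merged into one kernel-verified Lean document; each statement's English description precedes it below -/
import Mathlib

section
/- Let (S, η', μ') and (T, η, μ) be monads on a category A. Suppose λ_a : STa → TSa is a family of arrows (not assumed natural) satisfying: (i) λ_a ∘ S(η_a) = η_{Sa} and λ_a ∘ η'_{Ta} = T(η'_a) for all a; and (ii) λ_b ∘ S(f^T) = (λ_b ∘ Sf)^T ∘ λ_a for every f : a → Tb, where f^T := μ_b ∘ Tf. Then λ is automatically a natural transformation ST ⇒ TS; that is, λ_d ∘ ST(h) = TS(h) ∘ λ_c for every h : c → d. -/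
open CategoryTheory

universe v u

theorem CategoryTheory.Monad.map_comp_η_comp_μ {A : Type u} [Category.{v} A] (T : Monad A)
    {c d : A} (h : c ⟶ d) : T.map (h ≫ T.η.app d) ≫ T.μ.app d = T.map h := by
  rw [T.map_comp, Category.assoc, T.right_unit]
  exact Category.comp_id _

theorem stmt8_general {A : Type u} [Category.{v} A] (S T : Monad A)
    (l : ∀ a : A, S.obj (T.obj a) ⟶ T.obj (S.obj a))
    (hη : ∀ a : A, S.map (T.η.app a) ≫ l a = T.η.app (S.obj a))
    (hext : ∀ {a b : A} (f : a ⟶ T.obj b),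
      S.map (T.map f ≫ T.μ.app b) ≫ l b
        = l a ≫ T.map (S.map f ≫ l b) ≫ T.μ.app (S.obj b))
    {c d : A} (h : c ⟶ d) :
    S.map (T.map h) ≫ l d = l c ≫ T.map (S.map h) :=
  calc S.map (T.map h) ≫ l d
      = S.map (T.map (h ≫ T.η.app d) ≫ T.μ.app d) ≫ l d := by rw [T.map_comp_η_comp_μ]
    _ = l c ≫ T.map (S.map (h ≫ T.η.app d) ≫ l d) ≫ T.μ.app (S.obj d) := hext _
    _ = l c ≫ T.map (S.map h ≫ T.η.app (S.obj d)) ≫ T.μ.app (S.obj d) := by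
      rw [S.map_comp, Category.assoc, hη]
    _ = l c ≫ T.map (S.map h) := by rw [T.map_comp_η_comp_μ]

/-- A family `λ_a : STa ⟶ TSa` (not assumed natural) which is compatible with both units and
with the extension operation of `T` is automatically a natural transformation `ST ⇒ TS`. -/
theorem stmt8 {A : Type u} [Category.{v} A] (S T : Monad A)
    (l : ∀ a : A, S.obj (T.obj a) ⟶ T.obj (S.obj a))
    (hη : ∀ a : A, S.map (T.η.app a) ≫ l a = T.η.app (S.obj a))
    (hη' : ∀ a : A, S.η.app (T.obj a) ≫ l a = T.map (S.η.app a))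
    (hext : ∀ {a b : A} (f : a ⟶ T.obj b),
      S.map (T.map f ≫ T.μ.app b) ≫ l b
        = l a ≫ T.map (S.map f ≫ l b) ≫ T.μ.app (S.obj b))
    {c d : A} (h : c ⟶ d) :
    S.map (T.map h) ≫ l d = l c ≫ T.map (S.map h) :=
  stmt8_general S T l hη hext h
end

section
/- In a 2-category K, given 1-cells s : a → b (so arrows configured as s : a → b, t : b → c, u : a → c), left pasting operators (-)^# : K(x,b)(-, s·-) → K(x,c)(t·-, u·-) — families of functions K(x,b)(f, sg) → K(x,c)(tf, ug) respecting whiskering (θ^# h = (θh)^#) and blistering ((θ · κ)^# = θ^# · tκ) — are in bijective correspondence with 2-cells ts ⇒ u, via (-)^# ↦ (1_s)^#. Moreover every left pasting operator satisfies θ^# = (1_s)^# g · tθ for θ : f ⇒ sg. -/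
open CategoryTheory Bicategory

universe w v u

/-- A left pasting operator for `s : a ⟶ b`, `t : b ⟶ c`, `u : a ⟶ c` in a 2-category:
a family of functions sending a 2-cell `θ : f ⇒ sg` to a 2-cell `θ^# : tf ⇒ ug`,
respecting whiskering and blistering. -/
structure LeftPastingOperator {K : Type u} [Bicategory.{w, v} K] [Bicategory.Strict K]
    {a b c : K} (s : a ⟶ b) (t : b ⟶ c) (u : a ⟶ c) where
  op : ∀ {x : K} {f : x ⟶ b} {g : x ⟶ a}, (f ⟶ g ≫ s) → (f ≫ t ⟶ g ≫ u)
  whisker : ∀ {x z : K} (h : z ⟶ x) {f : x ⟶ b} {g : x ⟶ a} (θ : f ⟶ g ≫ s),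
    op ((h ◁ θ) ≫ (α_ h g s).inv)
      = (α_ h f t).hom ≫ (h ◁ op θ) ≫ (α_ h g u).inv
  blister : ∀ {x : K} {f f' : x ⟶ b} {g : x ⟶ a} (κ : f' ⟶ f) (θ : f ⟶ g ≫ s),
    op (κ ≫ θ) = (κ ▷ t) ≫ op θ

/-!
Writing `θ = θ · 1_{sg}`, blistering gives `θ^# = (1_{sg})^# · tθ`, and `1_{sg}` is the whiskering
`1_s g` (on the nose, as `K` is strict), so `(1_{sg})^# = (1_s)^# g`. Hence an operator is
determined by `(1_s)^#`, and conversely `θ ↦ φ g · tθ` is a pasting operator for every `φ : ts ⇒ u`.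
-/

namespace LeftPastingOperator

variable {K : Type u} [Bicategory.{w, v} K] [Bicategory.Strict K]
    {a b c : K} {s : a ⟶ b} {t : b ⟶ c} {u : a ⟶ c}

@[ext]
theorem ext {P Q : LeftPastingOperator s t u}
    (h : ∀ {x : K} {f : x ⟶ b} {g : x ⟶ a} (θ : f ⟶ g ≫ s), P.op θ = Q.op θ) : P = Q := by
  cases P; cases Q; congr; funext x f g θ; exact h θ

theorem op_comp_eqToHom (P : LeftPastingOperator s t u) {x : K} {f : x ⟶ b}
    {g g' : x ⟶ a} (h : g = g') (θ : f ⟶ g ≫ s) :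
    P.op (θ ≫ eqToHom (by rw [h])) = P.op θ ≫ eqToHom (by rw [h]) := by
  subst h; simp

def toCell (P : LeftPastingOperator s t u) : s ≫ t ⟶ u :=
  P.op (λ_ s).inv ≫ (λ_ u).hom

theorem op_id_comp (P : LeftPastingOperator s t u) {x : K} (g : x ⟶ a) :
    P.op (𝟙 (g ≫ s)) = (α_ g s t).hom ≫ g ◁ P.toCell := by
  have h := P.op_comp_eqToHom (Category.comp_id g).symm (𝟙 (g ≫ s))
  have hunit : 𝟙 (g ≫ s) ≫ eqToHom (show g ≫ s = (g ≫ 𝟙 a) ≫ s by simp)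
      = g ◁ (λ_ s).inv ≫ (α_ g (𝟙 a) s).inv := by
    simp [Strict.leftUnitor_eqToIso, Strict.associator_eqToIso]
  rw [hunit, P.whisker, eq_comm, comp_eqToHom_iff] at h
  rw [h]
  simp [toCell, Strict.leftUnitor_eqToIso, Strict.associator_eqToIso]

theorem op_eq (P : LeftPastingOperator s t u) {x : K} {f : x ⟶ b} {g : x ⟶ a}
    (θ : f ⟶ g ≫ s) : P.op θ = θ ▷ t ≫ (α_ g s t).hom ≫ g ◁ P.toCell := by
  rw [← Category.comp_id θ, P.blister, op_id_comp, Category.comp_id]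

def ofCell (φ : s ≫ t ⟶ u) : LeftPastingOperator s t u where
  op {_ _ g} θ := θ ▷ t ≫ (α_ g s t).hom ≫ g ◁ φ
  whisker := by intros; simp [Strict.associator_eqToIso]
  blister := by intros; simp

theorem toCell_ofCell (φ : s ≫ t ⟶ u) : (ofCell φ).toCell = φ := by
  simp [toCell, ofCell, Strict.leftUnitor_eqToIso, Strict.associator_eqToIso]

theorem ofCell_toCell (P : LeftPastingOperator s t u) : ofCell P.toCell = P :=
  ext fun θ => (P.op_eq θ).symm

def equivCell : LeftPastingOperator s t u ≃ (s ≫ t ⟶ u) where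
  toFun := toCell
  invFun := ofCell
  left_inv := ofCell_toCell
  right_inv := toCell_ofCell

end LeftPastingOperator

/-- Left pasting operators are in bijective correspondence with 2-cells `ts ⇒ u`,
via `(-)^# ↦ (1_s)^#`; moreover every left pasting operator satisfies
`θ^# = (1_s)^# g · tθ`. -/
theorem stmt11 {K : Type u} [Bicategory.{w, v} K] [Bicategory.Strict K]
    {a b c : K} (s : a ⟶ b) (t : b ⟶ c) (u : a ⟶ c) :
    ∃ e : LeftPastingOperator s t u ≃ (s ≫ t ⟶ u),
      (∀ P : LeftPastingOperator s t u,
        e P = P.op ((λ_ s).inv) ≫ (λ_ u).hom) ∧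
      (∀ (P : LeftPastingOperator s t u) {x : K} {f : x ⟶ b} {g : x ⟶ a}
        (θ : f ⟶ g ≫ s),
        P.op θ = (θ ▷ t) ≫ (α_ g s t).hom
          ≫ (g ◁ (P.op ((λ_ s).inv) ≫ (λ_ u).hom))) :=
  ⟨LeftPastingOperator.equivCell, fun _ => rfl, fun P => P.op_eq⟩
end

section
/- In a 2-category K, for a 2-cell η : 1_a ⇒ s : a → a, there is a bijection between right extension systems (s, η, (-)^s) on a — using right pasting operators K(a,y)(f, gs) → K(a,y)(fs, gs) — and monads (s, η, μ) on a, given by μ := (1_s)^s and θ^s := gμ · θs (for θ : f ⇒ gs : a → y). -/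
open CategoryTheory Bicategory

universe w v u

/-!
Blistering along `θ = θ · 1` and whiskering `(1_s)^s` by `g` give `θ^s = gμ · θs` with
`μ = (1_s)^s`, so an extension system is determined by `μ`. Through this formula the axioms
`θ^s · fη = θ`, `η^s = 1_s` and `κ^s · θ^s = (κ^s θ)^s` are exactly the left unit, right unit and
associativity laws of `μ`.
-/

/-- A right extension system `(s, η, (-)^s)` on an object `a` of a 2-category: a right pasting
operator sending `θ : f ⇒ gs : a → y` to `θ^s : fs ⇒ gs`, with `η^s = 1_s`, `θ^s · fη = θ`
and `κ^s · θ^s = (κ^s θ)^s`. -/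
structure RightExtensionSystem {K : Type u} [Bicategory.{w, v} K] [Bicategory.Strict K]
    {a : K} (s : a ⟶ a) (η : 𝟙 a ⟶ s) where
  ext : ∀ {y : K} {f g : a ⟶ y}, (f ⟶ s ≫ g) → (s ≫ f ⟶ s ≫ g)
  whisker : ∀ {y z : K} (h : y ⟶ z) {f g : a ⟶ y} (θ : f ⟶ s ≫ g),
    ext ((θ ▷ h) ≫ (α_ s g h).hom)
      = (α_ s f h).inv ≫ (ext θ ▷ h) ≫ (α_ s g h).hom
  blister : ∀ {y : K} {f f' g : a ⟶ y} (κ : f' ⟶ f) (θ : f ⟶ s ≫ g),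
    ext (κ ≫ θ) = (s ◁ κ) ≫ ext θ
  ext_η : ext (η ≫ (ρ_ s).inv) = 𝟙 (s ≫ 𝟙 a)
  η_ext : ∀ {y : K} {f g : a ⟶ y} (θ : f ⟶ s ≫ g),
    (λ_ f).inv ≫ (η ▷ f) ≫ ext θ = θ
  ext_ext : ∀ {y : K} {f g h : a ⟶ y} (θ : f ⟶ s ≫ g) (κ : g ⟶ s ≫ h),
    ext θ ≫ ext κ = ext (θ ≫ ext κ)

namespace RightExtensionSystem

variable {K : Type u} [Bicategory.{w, v} K] [Bicategory.Strict K] {a : K} {s : a ⟶ a}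
  {η : 𝟙 a ⟶ s}

theorem ext_comp_eqToHom (E : RightExtensionSystem s η) {y : K} {f g g' : a ⟶ y} (hg : g = g')
    (θ : f ⟶ s ≫ g) :
    E.ext (θ ≫ eqToHom (congrArg (s ≫ ·) hg)) = E.ext θ ≫ eqToHom (congrArg (s ≫ ·) hg) := by
  cases hg; simp

def mu (E : RightExtensionSystem s η) : s ≫ s ⟶ s := E.ext (ρ_ s).inv ≫ (ρ_ s).hom

theorem ext_id (E : RightExtensionSystem s η) {y : K} (g : a ⟶ y) :
    E.ext (𝟙 (s ≫ g)) = (α_ s s g).inv ≫ (E.mu ▷ g) := by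
  -- whiskering `(1_s)^s` by `g` yields a cell over `𝟙 a ≫ g`, which strictness identifies with `g`
  have h := E.whisker g (ρ_ s).inv
  simp only [Strict.associator_eqToIso, Strict.rightUnitor_eqToIso, eqToIso.hom, eqToIso.inv,
    eqToHom_whiskerRight, eqToHom_trans] at h
  rw [← Category.id_comp (eqToHom _), E.ext_comp_eqToHom (Category.id_comp g).symm,
    comp_eqToHom_iff] at h
  simp [mu, Strict.associator_eqToIso, Strict.rightUnitor_eqToIso, h]

theorem ext_rightUnitor_inv (E : RightExtensionSystem s η) :
    E.ext (ρ_ s).inv = E.mu ≫ (ρ_ s).inv := by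
  simp [mu]

theorem ext_eq_mu (E : RightExtensionSystem s η) {y : K} {f g : a ⟶ y} (θ : f ⟶ s ≫ g) :
    E.ext θ = (s ◁ θ) ≫ (α_ s s g).inv ≫ (E.mu ▷ g) := by
  rw [← E.ext_id, ← E.blister, Category.comp_id]

theorem mu_unit_left (E : RightExtensionSystem s η) :
    (λ_ s).inv ≫ (η ▷ s) ≫ E.mu = 𝟙 s := by
  rw [mu, reassoc_of% E.η_ext, Iso.inv_hom_id]

theorem mu_unit_right (E : RightExtensionSystem s η) :
    (ρ_ s).inv ≫ (s ◁ η) ≫ E.mu = 𝟙 s := by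
  rw [mu, ← reassoc_of% E.blister, E.ext_η]
  simp

theorem mu_assoc (E : RightExtensionSystem s η) :
    (E.mu ▷ s) ≫ E.mu = (α_ s s s).hom ≫ (s ◁ E.mu) ≫ E.mu := by
  have h := E.ext_ext (𝟙 (s ≫ s)) (ρ_ s).inv
  rw [Category.id_comp, E.ext_rightUnitor_inv, E.blister, E.ext_rightUnitor_inv, E.ext_id] at h
  simp only [← Category.assoc, cancel_mono] at h
  rwa [Category.assoc, Iso.inv_comp_eq] at h

def ofMonad (μ : s ≫ s ⟶ s)
    (unit_left : (λ_ s).inv ≫ (η ▷ s) ≫ μ = 𝟙 s)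
    (unit_right : (ρ_ s).inv ≫ (s ◁ η) ≫ μ = 𝟙 s)
    (assoc : (μ ▷ s) ≫ μ = (α_ s s s).hom ≫ (s ◁ μ) ≫ μ) :
    RightExtensionSystem s η where
  ext {_ _ g} θ := (s ◁ θ) ≫ (α_ s s g).inv ≫ (μ ▷ g)
  whisker := by intros; bicategory
  blister κ θ := by simp
  ext_η := by
    calc _ = ((ρ_ s).inv ≫ s ◁ η ≫ μ) ▷ 𝟙 a := by bicategory
      _ = _ := by rw [unit_right, id_whiskerRight]
  η_ext {_ _ g} θ := by
    calc _ = θ ≫ ((λ_ s).inv ≫ η ▷ s ≫ μ) ▷ g := by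
          rw [← whisker_exchange_assoc, ← leftUnitor_inv_naturality_assoc]; bicategory
      _ = θ := by rw [unit_left, id_whiskerRight, Category.comp_id]
  ext_ext {_ _ _ h} θ κ := by
    simp only [Category.assoc]
    rw [← whisker_exchange_assoc]
    calc _ = s ◁ θ ≫ (α_ _ _ _).inv ≫ (s ≫ s) ◁ κ ≫ (α_ _ _ _).inv ≫ ((μ ▷ s) ≫ μ) ▷ h := by
          bicategory
      _ = _ := by rw [assoc]; bicategory

theorem mu_ofMonad (μ : s ≫ s ⟶ s) (unit_left unit_right assoc) :
    (ofMonad (η := η) μ unit_left unit_right assoc).mu = μ := by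
  simp only [mu, ofMonad]
  bicategory

theorem eq_of_ext_eq {E₁ E₂ : RightExtensionSystem s η}
    (h : ∀ {y : K} {f g : a ⟶ y} (θ : f ⟶ s ≫ g), E₁.ext θ = E₂.ext θ) : E₁ = E₂ := by
  obtain ⟨ext₁, _, _, _, _, _⟩ := E₁
  obtain ⟨ext₂, _, _, _, _, _⟩ := E₂
  obtain rfl : @ext₁ = @ext₂ := by
    funext y f g θ
    exact h θ
  rfl

variable (s η) in
def equivMonadMul : RightExtensionSystem s η ≃
    { μ : s ≫ s ⟶ s //
      (λ_ s).inv ≫ (η ▷ s) ≫ μ = 𝟙 s ∧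
      (ρ_ s).inv ≫ (s ◁ η) ≫ μ = 𝟙 s ∧
      (μ ▷ s) ≫ μ = (α_ s s s).hom ≫ (s ◁ μ) ≫ μ } where
  toFun E := ⟨E.mu, E.mu_unit_left, E.mu_unit_right, E.mu_assoc⟩
  invFun μ := ofMonad μ.1 μ.2.1 μ.2.2.1 μ.2.2.2
  left_inv E := eq_of_ext_eq fun θ => (E.ext_eq_mu θ).symm
  right_inv _ := Subtype.ext (mu_ofMonad ..)

end RightExtensionSystem

/-- For a 2-cell `η : 1_a ⇒ s`, right extension systems `(s, η, (-)^s)` are in bijection with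
monads `(s, η, μ)`, via `μ := (1_s)^s` and `θ^s := gμ · θs`. -/
theorem stmt13 {K : Type u} [Bicategory.{w, v} K] [Bicategory.Strict K]
    {a : K} (s : a ⟶ a) (η : 𝟙 a ⟶ s) :
    ∃ e : RightExtensionSystem s η ≃
      { μ : s ≫ s ⟶ s //
        (λ_ s).inv ≫ (η ▷ s) ≫ μ = 𝟙 s ∧
        (ρ_ s).inv ≫ (s ◁ η) ≫ μ = 𝟙 s ∧
        (μ ▷ s) ≫ μ = (α_ s s s).hom ≫ (s ◁ μ) ≫ μ },
      (∀ E : RightExtensionSystem s η,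
        (e E).val = E.ext ((ρ_ s).inv) ≫ (ρ_ s).hom) ∧
      (∀ (E : RightExtensionSystem s η) {y : K} {f g : a ⟶ y} (θ : f ⟶ s ≫ g),
        E.ext θ = (s ◁ θ) ≫ (α_ s s g).inv ≫ ((e E).val ▷ g)) :=
  ⟨RightExtensionSystem.equivMonadMul s η, fun _ => rfl, fun E _ _ _ θ => E.ext_eq_mu θ⟩
end

section
/- Let (c, s, η', μ') and (d, t, η, μ) be monads in a 2-category K and f : d → c a 1-cell. A 2-cell φ : sf ⇒ ft satisfies the Eilenberg–Moore-morphism axioms (φ · η'f = fη, and φ · μ'f = fμ · φt · sφ) if and only if φ satisfies φ · η'f = fη and, for every 2-cell θ : g ⇒ hs : c → y, the equation hφ · θ^s f = (hφ · θf)^t · gφ holds, where (-)^s and (-)^t are the right extension operators of s and t (θ^s := hμ' · θs, and for ρ : g ⇒ ht, ρ^t := hμ · ρt). -/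
/-!
The no-iteration equation is natural in `θ`: precomposing `θ` with a 2-cell `g' ⟶ g` changes both
sides by the same whiskering. It therefore suffices to check it on identities `θ = 𝟙 (s ≫ h)`, where
it is the axiom EMM whiskered by `h`. Conversely, EMM is the instance `θ = (ρ_ s).inv`.
-/

open CategoryTheory Bicategory

universe w v u

namespace EilenbergMooreMorphism

variable {K : Type u} [Bicategory.{w, v} K] {c d y : K} {s : c ⟶ c} {t : d ⟶ d}

/-- The right extension operator `θ ↦ θ^s := hμ · θs`. -/
def kleisliExt (μ : s ≫ s ⟶ s) {g h : c ⟶ y} (θ : g ⟶ s ≫ h) : s ≫ g ⟶ s ≫ h :=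
  s ◁ θ ≫ (α_ s s h).inv ≫ μ ▷ h

/-- The 2-cell `hφ : f ≫ s ≫ h ⟶ t ≫ f ≫ h`. -/
def whiskerRightAssoc {f : d ⟶ c} (φ : f ≫ s ⟶ t ≫ f) (h : c ⟶ y) : f ≫ s ≫ h ⟶ t ≫ f ≫ h :=
  (α_ f s h).inv ≫ φ ▷ h ≫ (α_ t f h).hom

theorem kleisliExt_comp (μ : s ≫ s ⟶ s) {g g' h : c ⟶ y} (θ : g' ⟶ g) (σ : g ⟶ s ≫ h) :
    kleisliExt μ (θ ≫ σ) = s ◁ θ ≫ kleisliExt μ σ := by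
  simp only [kleisliExt, whiskerLeft_comp, Category.assoc]

theorem kleisliExt_eq_whiskerLeft_comp (μ : s ≫ s ⟶ s) {g h : c ⟶ y} (θ : g ⟶ s ≫ h) :
    kleisliExt μ θ = s ◁ θ ≫ kleisliExt μ (𝟙 (s ≫ h)) := by
  rw [← kleisliExt_comp, Category.comp_id]

variable {f : d ⟶ c} (φ : f ≫ s ⟶ t ≫ f)

theorem whiskerLeft_whiskerLeft_comp_whiskerRightAssoc {g k : c ⟶ y} (θ : g ⟶ k) :
    f ◁ s ◁ θ ≫ whiskerRightAssoc φ k = whiskerRightAssoc φ g ≫ t ◁ f ◁ θ := by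
  simp only [whiskerRightAssoc]
  calc _ = (α_ f s g).inv ≫ ((f ≫ s) ◁ θ ≫ φ ▷ k) ≫ (α_ t f k).hom := by bicategory
    _ = (α_ f s g).inv ≫ (φ ▷ g ≫ (t ≫ f) ◁ θ) ≫ (α_ t f k).hom := by rw [whisker_exchange]
    _ = _ := by bicategory

variable {μ' : s ≫ s ⟶ s} {μ : t ≫ t ⟶ t}

theorem whiskerLeft_kleisliExt_id_comp_whiskerRightAssoc
    (hφ : f ◁ μ' ≫ φ = (α_ f s s).inv ≫ φ ▷ s ≫ (α_ t f s).hom ≫ t ◁ φ ≫ (α_ t t f).inv ≫ μ ▷ f)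
    (h : c ⟶ y) :
    f ◁ kleisliExt μ' (𝟙 (s ≫ h)) ≫ whiskerRightAssoc φ h =
      whiskerRightAssoc φ (s ≫ h) ≫ kleisliExt μ (whiskerRightAssoc φ h) := by
  simp only [kleisliExt, whiskerRightAssoc]
  calc _ = f ◁ (α_ s s h).inv ≫ (α_ f (s ≫ s) h).inv ≫ (f ◁ μ' ≫ φ) ▷ h ≫ (α_ t f h).hom := by
        bicategory
    _ = _ := by rw [hφ]; bicategory

theorem whiskerLeft_kleisliExt_comp_whiskerRightAssoc
    (hφ : f ◁ μ' ≫ φ = (α_ f s s).inv ≫ φ ▷ s ≫ (α_ t f s).hom ≫ t ◁ φ ≫ (α_ t t f).inv ≫ μ ▷ f)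
    {g h : c ⟶ y} (θ : g ⟶ s ≫ h) :
    f ◁ kleisliExt μ' θ ≫ whiskerRightAssoc φ h =
      whiskerRightAssoc φ g ≫ kleisliExt μ (f ◁ θ ≫ whiskerRightAssoc φ h) := by
  rw [kleisliExt_eq_whiskerLeft_comp, whiskerLeft_comp, Category.assoc,
    whiskerLeft_kleisliExt_id_comp_whiskerRightAssoc φ hφ,
    ← Category.assoc, whiskerLeft_whiskerLeft_comp_whiskerRightAssoc, Category.assoc,
    kleisliExt_comp]

theorem emm_of_whiskerLeft_kleisliExt_comp_whiskerRightAssoc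
    (hφ : f ◁ kleisliExt μ' (ρ_ s).inv ≫ whiskerRightAssoc φ (𝟙 c) =
      whiskerRightAssoc φ s ≫ kleisliExt μ (f ◁ (ρ_ s).inv ≫ whiskerRightAssoc φ (𝟙 c))) :
    f ◁ μ' ≫ φ = (α_ f s s).inv ≫ φ ▷ s ≫ (α_ t f s).hom ≫ t ◁ φ ≫ (α_ t t f).inv ≫ μ ▷ f := by
  calc _ = (f ◁ kleisliExt μ' (ρ_ s).inv ≫ whiskerRightAssoc φ (𝟙 c)) ≫ t ◁ (ρ_ f).hom := by
        simp only [kleisliExt, whiskerRightAssoc]; bicategory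
    _ = _ := by rw [hφ]; simp only [kleisliExt, whiskerRightAssoc]; bicategory

theorem emm_iff_forall_whiskerLeft_kleisliExt_comp_whiskerRightAssoc :
    f ◁ μ' ≫ φ = (α_ f s s).inv ≫ φ ▷ s ≫ (α_ t f s).hom ≫ t ◁ φ ≫ (α_ t t f).inv ≫ μ ▷ f ↔
      ∀ {y : K} {g h : c ⟶ y} (θ : g ⟶ s ≫ h),
        f ◁ kleisliExt μ' θ ≫ whiskerRightAssoc φ h =
          whiskerRightAssoc φ g ≫ kleisliExt μ (f ◁ θ ≫ whiskerRightAssoc φ h) :=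
  ⟨fun hφ _ _ _ θ => whiskerLeft_kleisliExt_comp_whiskerRightAssoc φ hφ θ,
    fun hφ => emm_of_whiskerLeft_kleisliExt_comp_whiskerRightAssoc φ (hφ _)⟩

end EilenbergMooreMorphism

theorem stmt15_general {K : Type u} [Bicategory.{w, v} K]
    {c d : K} (s : c ⟶ c) (η' : 𝟙 c ⟶ s) (μ' : s ≫ s ⟶ s)
    (t : d ⟶ d) (η : 𝟙 d ⟶ t) (μ : t ≫ t ⟶ t)
    (f : d ⟶ c) (φ : f ≫ s ⟶ t ≫ f) :
    (((ρ_ f).inv ≫ (f ◁ η') ≫ φ = (λ_ f).inv ≫ (η ▷ f)) ∧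
      ((f ◁ μ') ≫ φ
        = (α_ f s s).inv ≫ (φ ▷ s) ≫ (α_ t f s).hom ≫ (t ◁ φ)
            ≫ (α_ t t f).inv ≫ (μ ▷ f))) ↔
    (((ρ_ f).inv ≫ (f ◁ η') ≫ φ = (λ_ f).inv ≫ (η ▷ f)) ∧
      (∀ {y : K} {g h : c ⟶ y} (θ : g ⟶ s ≫ h),
        (f ◁ ((s ◁ θ) ≫ (α_ s s h).inv ≫ (μ' ▷ h)))
            ≫ (α_ f s h).inv ≫ (φ ▷ h) ≫ (α_ t f h).hom
          = (α_ f s g).inv ≫ (φ ▷ g) ≫ (α_ t f g).hom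
            ≫ ((t ◁ ((f ◁ θ) ≫ (α_ f s h).inv ≫ (φ ▷ h) ≫ (α_ t f h).hom))
                ≫ (α_ t t (f ≫ h)).inv ≫ (μ ▷ (f ≫ h))))) := by
  simpa only [EilenbergMooreMorphism.kleisliExt, EilenbergMooreMorphism.whiskerRightAssoc,
    Category.assoc] using and_congr_right'
      (EilenbergMooreMorphism.emm_iff_forall_whiskerLeft_kleisliExt_comp_whiskerRightAssoc
        (μ' := μ') (μ := μ) φ)

/-- A 2-cell `φ : sf ⇒ ft` satisfies the Eilenberg–Moore-morphism axioms (EMU and EMM) iff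
it satisfies EMU and the no-iteration condition `hφ · θ^s f = (hφ · θf)^t · gφ` for every
2-cell `θ : g ⇒ hs`, where `(-)^s` and `(-)^t` are the right extension operators. -/
theorem stmt15 {K : Type u} [Bicategory.{w, v} K] [Bicategory.Strict K]
    {c d : K} (s : c ⟶ c) (η' : 𝟙 c ⟶ s) (μ' : s ≫ s ⟶ s)
    (t : d ⟶ d) (η : 𝟙 d ⟶ t) (μ : t ≫ t ⟶ t)
    (hη₁ : (λ_ s).inv ≫ (η' ▷ s) ≫ μ' = 𝟙 s)
    (hη₂ : (ρ_ s).inv ≫ (s ◁ η') ≫ μ' = 𝟙 s)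
    (hμ'assoc : (μ' ▷ s) ≫ μ' = (α_ s s s).hom ≫ (s ◁ μ') ≫ μ')
    (hη₃ : (λ_ t).inv ≫ (η ▷ t) ≫ μ = 𝟙 t)
    (hη₄ : (ρ_ t).inv ≫ (t ◁ η) ≫ μ = 𝟙 t)
    (hμassoc : (μ ▷ t) ≫ μ = (α_ t t t).hom ≫ (t ◁ μ) ≫ μ)
    (f : d ⟶ c) (φ : f ≫ s ⟶ t ≫ f) :
    (((ρ_ f).inv ≫ (f ◁ η') ≫ φ = (λ_ f).inv ≫ (η ▷ f)) ∧
      ((f ◁ μ') ≫ φ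
        = (α_ f s s).inv ≫ (φ ▷ s) ≫ (α_ t f s).hom ≫ (t ◁ φ)
            ≫ (α_ t t f).inv ≫ (μ ▷ f))) ↔
    (((ρ_ f).inv ≫ (f ◁ η') ≫ φ = (λ_ f).inv ≫ (η ▷ f)) ∧
      (∀ {y : K} {g h : c ⟶ y} (θ : g ⟶ s ≫ h),
        (f ◁ ((s ◁ θ) ≫ (α_ s s h).inv ≫ (μ' ▷ h)))
            ≫ (α_ f s h).inv ≫ (φ ▷ h) ≫ (α_ t f h).hom
          = (α_ f s g).inv ≫ (φ ▷ g) ≫ (α_ t f g).hom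
            ≫ ((t ◁ ((f ◁ θ) ≫ (α_ f s h).inv ≫ (φ ▷ h) ≫ (α_ t f h).hom))
                ≫ (α_ t t (f ≫ h)).inv ≫ (μ ▷ (f ≫ h))))) :=
  stmt15_general s η' μ' t η μ f φ
end

section
/- Let (s, η', μ') and (t, η, μ) be monads on an object a of a 2-category K. There is a bijective correspondence between distributive laws λ : st ⇒ ts of s over t (compatible with both units and multiplications) and 2-cells λ : st ⇒ ts such that: (1) λ · sη = ηs and λ · η't = tη'; (2) for every 2-cell θ : f ⇒ tg : x → a, λg · sθ^t = (λg · sθ)^t · λf, where θ^t := μg · tθ; (3) for every 2-cell κ : h ⇒ ks : a → y, kλ · κ^s t = (kλ · κt)^s · hλ, where κ^s := kμ' · κs. -/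
/-!
Condition (2) instantiated at the inverse left unitor `θ : t ⇒ 𝟙 ≫ t` is exactly compatibility
with `μ`; conversely, compatibility with `μ` gives (2) for every `θ` once `θ` is slid past the
distributive law by the interchange law. Dually, (3) at the inverse right unitor is compatibility
with `μ'`.
-/

open CategoryTheory Bicategory

universe w v u

namespace Bicategory.DistributiveLaw

variable {K : Type u} [Bicategory.{w, v} K] {a : K} (s t : a ⟶ a)

/-- The left `t`-extension `θ^t = μg · tθ`. -/
def leftExt (μ : t ≫ t ⟶ t) {x : K} {f g : x ⟶ a} (θ : f ⟶ g ≫ t) : f ≫ t ⟶ g ≫ t :=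
  (θ ▷ t) ≫ (α_ g t t).hom ≫ (g ◁ μ)

/-- The right `s`-extension `κ^s = kμ' · κs`. -/
def rightExt (μ' : s ≫ s ⟶ s) {y : K} {h k : a ⟶ y} (κ : h ⟶ s ≫ k) : s ≫ h ⟶ s ≫ k :=
  (s ◁ κ) ≫ (α_ s s k).inv ≫ (μ' ▷ k)

variable {s t}

theorem mul_compat_iff_leftExt_compat (μ : t ≫ t ⟶ t) (l : t ≫ s ⟶ s ≫ t) :
    (μ ▷ s) ≫ l
        = (α_ t t s).hom ≫ (t ◁ l) ≫ (α_ t s t).inv ≫ (l ▷ t) ≫ (α_ s t t).hom ≫ (s ◁ μ) ↔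
      ∀ {x : K} {f g : x ⟶ a} (θ : f ⟶ g ≫ t),
        (leftExt t μ θ ▷ s) ≫ (α_ g t s).hom ≫ (g ◁ l)
          = (α_ f t s).hom ≫ (f ◁ l) ≫ (α_ f s t).inv
            ≫ leftExt t μ ((θ ▷ s) ≫ (α_ g t s).hom ≫ (g ◁ l) ≫ (α_ g s t).inv)
            ≫ (α_ g s t).hom := by
  unfold leftExt
  constructor
  · intro h x f g θ
    calc _ = ((θ ▷ t) ▷ s) ≫ ((α_ g t t).hom ▷ s) ≫ (α_ g (t ≫ t) s).hom
              ≫ (g ◁ ((μ ▷ s) ≫ l)) := by bicategory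
      _ = (α_ f t s).hom ≫ ((θ ▷ (t ≫ s)) ≫ ((g ≫ t) ◁ l)) ≫ (α_ g t (s ≫ t)).hom
              ≫ (g ◁ ((α_ t s t).inv ≫ (l ▷ t) ≫ (α_ s t t).hom ≫ (s ◁ μ))) := by
            rw [h]; bicategory
      _ = (α_ f t s).hom ≫ ((f ◁ l) ≫ (θ ▷ (s ≫ t))) ≫ (α_ g t (s ≫ t)).hom
              ≫ (g ◁ ((α_ t s t).inv ≫ (l ▷ t) ≫ (α_ s t t).hom ≫ (s ◁ μ))) := by
            rw [whisker_exchange]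
      _ = _ := by bicategory
  · intro h
    have unit := h (f := t) (g := 𝟙 a) (λ_ t).inv
    calc (μ ▷ s) ≫ l
        = (((((λ_ t).inv ▷ t) ≫ (α_ (𝟙 a) t t).hom ≫ (𝟙 a ◁ μ)) ▷ s)
            ≫ (α_ (𝟙 a) t s).hom ≫ (𝟙 a ◁ l)) ≫ (λ_ (s ≫ t)).hom := by bicategory
      _ = _ := by rw [unit]; bicategory

theorem mul_compat_iff_rightExt_compat (μ' : s ≫ s ⟶ s) (l : t ≫ s ⟶ s ≫ t) :
    (t ◁ μ') ≫ l
        = (α_ t s s).inv ≫ (l ▷ s) ≫ (α_ s t s).hom ≫ (s ◁ l) ≫ (α_ s s t).inv ≫ (μ' ▷ t) ↔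
      ∀ {y : K} {h k : a ⟶ y} (κ : h ⟶ s ≫ k),
        (t ◁ rightExt s μ' κ) ≫ (α_ t s k).inv ≫ (l ▷ k) ≫ (α_ s t k).hom
          = (α_ t s h).inv ≫ (l ▷ h) ≫ (α_ s t h).hom
            ≫ rightExt s μ' ((t ◁ κ) ≫ (α_ t s k).inv ≫ (l ▷ k) ≫ (α_ s t k).hom) := by
  unfold rightExt
  constructor
  · intro hl y h k κ
    calc _ = (t ◁ (s ◁ κ)) ≫ (t ◁ (α_ s s k).inv) ≫ (α_ t (s ≫ s) k).inv
              ≫ (((t ◁ μ') ≫ l) ▷ k) ≫ (α_ s t k).hom := by bicategory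
      _ = (α_ t s h).inv ≫ (((t ≫ s) ◁ κ) ≫ (l ▷ (s ≫ k))) ≫ (α_ s t (s ≫ k)).hom
              ≫ (s ◁ ((α_ t s k).inv ≫ (l ▷ k) ≫ (α_ s t k).hom))
              ≫ (α_ s s (t ≫ k)).inv ≫ (μ' ▷ (t ≫ k)) := by
            rw [hl]; bicategory
      _ = (α_ t s h).inv ≫ ((l ▷ h) ≫ ((s ≫ t) ◁ κ)) ≫ (α_ s t (s ≫ k)).hom
              ≫ (s ◁ ((α_ t s k).inv ≫ (l ▷ k) ≫ (α_ s t k).hom))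
              ≫ (α_ s s (t ≫ k)).inv ≫ (μ' ▷ (t ≫ k)) := by
            rw [whisker_exchange]
      _ = _ := by bicategory
  · intro hl
    have unit := hl (h := s) (k := 𝟙 a) (ρ_ s).inv
    calc (t ◁ μ') ≫ l
        = ((t ◁ ((s ◁ (ρ_ s).inv) ≫ (α_ s s (𝟙 a)).inv ≫ (μ' ▷ 𝟙 a)))
            ≫ (α_ t s (𝟙 a)).inv ≫ (l ▷ 𝟙 a) ≫ (α_ s t (𝟙 a)).hom)
            ≫ (s ◁ (ρ_ t).hom) := by bicategory
      _ = _ := by rw [unit]; bicategory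

end Bicategory.DistributiveLaw

theorem stmt18_general {K : Type u} [Bicategory.{w, v} K]
    {a : K} (s : a ⟶ a) (η' : 𝟙 a ⟶ s) (μ' : s ≫ s ⟶ s)
    (t : a ⟶ a) (η : 𝟙 a ⟶ t) (μ : t ≫ t ⟶ t) :
    ∃ e :
      { l : t ≫ s ⟶ s ≫ t //
        ((λ_ s).inv ≫ (η ▷ s) ≫ l = (ρ_ s).inv ≫ (s ◁ η)) ∧
        ((ρ_ t).inv ≫ (t ◁ η') ≫ l = (λ_ t).inv ≫ (η' ▷ t)) ∧
        ((μ ▷ s) ≫ l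
          = (α_ t t s).hom ≫ (t ◁ l) ≫ (α_ t s t).inv ≫ (l ▷ t)
              ≫ (α_ s t t).hom ≫ (s ◁ μ)) ∧
        ((t ◁ μ') ≫ l
          = (α_ t s s).inv ≫ (l ▷ s) ≫ (α_ s t s).hom ≫ (s ◁ l)
              ≫ (α_ s s t).inv ≫ (μ' ▷ t)) } ≃
      { l : t ≫ s ⟶ s ≫ t //
        ((λ_ s).inv ≫ (η ▷ s) ≫ l = (ρ_ s).inv ≫ (s ◁ η)) ∧
        ((ρ_ t).inv ≫ (t ◁ η') ≫ l = (λ_ t).inv ≫ (η' ▷ t)) ∧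
        (∀ {x : K} {f g : x ⟶ a} (θ : f ⟶ g ≫ t),
          ((((θ ▷ t) ≫ (α_ g t t).hom ≫ (g ◁ μ)) ▷ s) ≫ (α_ g t s).hom ≫ (g ◁ l)
            = (α_ f t s).hom ≫ (f ◁ l) ≫ (α_ f s t).inv
              ≫ ((((θ ▷ s) ≫ (α_ g t s).hom ≫ (g ◁ l) ≫ (α_ g s t).inv) ▷ t)
                  ≫ (α_ (g ≫ s) t t).hom ≫ ((g ≫ s) ◁ μ))
              ≫ (α_ g s t).hom)) ∧
        (∀ {y : K} {h k : a ⟶ y} (κ : h ⟶ s ≫ k),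
          ((t ◁ ((s ◁ κ) ≫ (α_ s s k).inv ≫ (μ' ▷ k)))
              ≫ (α_ t s k).inv ≫ (l ▷ k) ≫ (α_ s t k).hom
            = (α_ t s h).inv ≫ (l ▷ h) ≫ (α_ s t h).hom
              ≫ ((s ◁ ((t ◁ κ) ≫ (α_ t s k).inv ≫ (l ▷ k) ≫ (α_ s t k).hom))
                  ≫ (α_ s s (t ≫ k)).inv ≫ (μ' ▷ (t ≫ k))))) },
      ∀ p, (e p).val = p.val :=
  ⟨Equiv.subtypeEquivRight fun l => and_congr_right' <| and_congr_right' <|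
      and_congr (Bicategory.DistributiveLaw.mul_compat_iff_leftExt_compat μ l)
        (Bicategory.DistributiveLaw.mul_compat_iff_rightExt_compat μ' l),
    fun _ => rfl⟩

/-- Bijective correspondence between distributive laws `λ : st ⇒ ts` of a monad `s` over a
monad `t` on an object `a` of a 2-category and no-iteration distributive laws: 2-cells
`λ : st ⇒ ts` compatible with both units, with the left `t`-extension operator and with the
right `s`-extension operator. -/
theorem stmt18 {K : Type u} [Bicategory.{w, v} K] [Bicategory.Strict K]
    {a : K} (s : a ⟶ a) (η' : 𝟙 a ⟶ s) (μ' : s ≫ s ⟶ s)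
    (t : a ⟶ a) (η : 𝟙 a ⟶ t) (μ : t ≫ t ⟶ t)
    (hη₁ : (λ_ s).inv ≫ (η' ▷ s) ≫ μ' = 𝟙 s)
    (hη₂ : (ρ_ s).inv ≫ (s ◁ η') ≫ μ' = 𝟙 s)
    (hμ'assoc : (μ' ▷ s) ≫ μ' = (α_ s s s).hom ≫ (s ◁ μ') ≫ μ')
    (hη₃ : (λ_ t).inv ≫ (η ▷ t) ≫ μ = 𝟙 t)
    (hη₄ : (ρ_ t).inv ≫ (t ◁ η) ≫ μ = 𝟙 t)
    (hμassoc : (μ ▷ t) ≫ μ = (α_ t t t).hom ≫ (t ◁ μ) ≫ μ) :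
    ∃ e :
      { l : t ≫ s ⟶ s ≫ t //
        ((λ_ s).inv ≫ (η ▷ s) ≫ l = (ρ_ s).inv ≫ (s ◁ η)) ∧
        ((ρ_ t).inv ≫ (t ◁ η') ≫ l = (λ_ t).inv ≫ (η' ▷ t)) ∧
        ((μ ▷ s) ≫ l
          = (α_ t t s).hom ≫ (t ◁ l) ≫ (α_ t s t).inv ≫ (l ▷ t)
              ≫ (α_ s t t).hom ≫ (s ◁ μ)) ∧
        ((t ◁ μ') ≫ l
          = (α_ t s s).inv ≫ (l ▷ s) ≫ (α_ s t s).hom ≫ (s ◁ l)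
              ≫ (α_ s s t).inv ≫ (μ' ▷ t)) } ≃
      { l : t ≫ s ⟶ s ≫ t //
        ((λ_ s).inv ≫ (η ▷ s) ≫ l = (ρ_ s).inv ≫ (s ◁ η)) ∧
        ((ρ_ t).inv ≫ (t ◁ η') ≫ l = (λ_ t).inv ≫ (η' ▷ t)) ∧
        (∀ {x : K} {f g : x ⟶ a} (θ : f ⟶ g ≫ t),
          ((((θ ▷ t) ≫ (α_ g t t).hom ≫ (g ◁ μ)) ▷ s) ≫ (α_ g t s).hom ≫ (g ◁ l)
            = (α_ f t s).hom ≫ (f ◁ l) ≫ (α_ f s t).inv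
              ≫ ((((θ ▷ s) ≫ (α_ g t s).hom ≫ (g ◁ l) ≫ (α_ g s t).inv) ▷ t)
                  ≫ (α_ (g ≫ s) t t).hom ≫ ((g ≫ s) ◁ μ))
              ≫ (α_ g s t).hom)) ∧
        (∀ {y : K} {h k : a ⟶ y} (κ : h ⟶ s ≫ k),
          ((t ◁ ((s ◁ κ) ≫ (α_ s s k).inv ≫ (μ' ▷ k)))
              ≫ (α_ t s k).inv ≫ (l ▷ k) ≫ (α_ s t k).hom
            = (α_ t s h).inv ≫ (l ▷ h) ≫ (α_ s t h).hom
              ≫ ((s ◁ ((t ◁ κ) ≫ (α_ t s k).inv ≫ (l ▷ k) ≫ (α_ s t k).hom))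
                  ≫ (α_ s s (t ≫ k)).inv ≫ (μ' ▷ (t ≫ k))))) },
      ∀ p, (e p).val = p.val :=
  stmt18_general s η' μ' t η μ
end

section
/- Let (s, η', μ') and (t, η, μ) be monads on an object a of a 2-category K and λ : st ⇒ ts a 2-cell satisfying λ · sη = ηs, λ · η't = tη', and conditions (2) and (3) of a no-iteration distributive law (λg · sθ^t = (λg · sθ)^t · λf for θ : f ⇒ tg, and kλ · κ^s t = (kλ · κt)^s · hλ for κ : h ⇒ ks). Then λ is compatible with both multiplications: λ · sμ = μs · tλ · λt and λ · μ't = tμ' · λs · sλ; in particular, applying condition (2) with θ = 1_t yields the first, and condition (3) with κ = 1_s yields the second. -/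
open CategoryTheory Bicategory

universe w v u

section

variable {K : Type u} [Bicategory.{w, v} K] {a : K}

theorem mul_left_compat_of_noIteration (s t : a ⟶ a) (μ : t ≫ t ⟶ t) (l : t ≫ s ⟶ s ≫ t)
    (h2 : ∀ {x : K} {f g : x ⟶ a} (θ : f ⟶ g ≫ t),
          ((((θ ▷ t) ≫ (α_ g t t).hom ≫ (g ◁ μ)) ▷ s) ≫ (α_ g t s).hom ≫ (g ◁ l)
            = (α_ f t s).hom ≫ (f ◁ l) ≫ (α_ f s t).inv
              ≫ ((((θ ▷ s) ≫ (α_ g t s).hom ≫ (g ◁ l) ≫ (α_ g s t).inv) ▷ t)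
                  ≫ (α_ (g ≫ s) t t).hom ≫ ((g ≫ s) ◁ μ))
              ≫ (α_ g s t).hom)) :
    (μ ▷ s) ≫ l
      = (α_ t t s).hom ≫ (t ◁ l) ≫ (α_ t s t).inv ≫ (l ▷ t) ≫ (α_ s t t).hom ≫ (s ◁ μ) := by
  -- `θ = 1_t` enters as the unitor `t ⟶ 𝟙 a ≫ t`, so the instance holds only up to a unitor.
  rw [← cancel_mono (λ_ (s ≫ t)).inv]
  simpa using h2 (λ_ t).inv

theorem mul_right_compat_of_noIteration (s t : a ⟶ a) (μ' : s ≫ s ⟶ s) (l : t ≫ s ⟶ s ≫ t)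
    (h3 : ∀ {y : K} {h k : a ⟶ y} (κ : h ⟶ s ≫ k),
          ((t ◁ ((s ◁ κ) ≫ (α_ s s k).inv ≫ (μ' ▷ k)))
              ≫ (α_ t s k).inv ≫ (l ▷ k) ≫ (α_ s t k).hom
            = (α_ t s h).inv ≫ (l ▷ h) ≫ (α_ s t h).hom
              ≫ ((s ◁ ((t ◁ κ) ≫ (α_ t s k).inv ≫ (l ▷ k) ≫ (α_ s t k).hom))
                  ≫ (α_ s s (t ≫ k)).inv ≫ (μ' ▷ (t ≫ k))))) :
    (t ◁ μ') ≫ l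
      = (α_ t s s).inv ≫ (l ▷ s) ≫ (α_ s t s).hom ≫ (s ◁ l) ≫ (α_ s s t).inv ≫ (μ' ▷ t) := by
  rw [← cancel_mono (ρ_ (s ≫ t)).inv, ← cancel_mono (α_ s t (𝟙 a)).hom]
  simpa using h3 (ρ_ s).inv

end

theorem stmt19_general {K : Type u} [Bicategory.{w, v} K]
    {a : K} (s : a ⟶ a) (μ' : s ≫ s ⟶ s)
    (t : a ⟶ a) (μ : t ≫ t ⟶ t)
    (l : t ≫ s ⟶ s ≫ t)
    (h2 : ∀ {x : K} {f g : x ⟶ a} (θ : f ⟶ g ≫ t),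
          ((((θ ▷ t) ≫ (α_ g t t).hom ≫ (g ◁ μ)) ▷ s) ≫ (α_ g t s).hom ≫ (g ◁ l)
            = (α_ f t s).hom ≫ (f ◁ l) ≫ (α_ f s t).inv
              ≫ ((((θ ▷ s) ≫ (α_ g t s).hom ≫ (g ◁ l) ≫ (α_ g s t).inv) ▷ t)
                  ≫ (α_ (g ≫ s) t t).hom ≫ ((g ≫ s) ◁ μ))
              ≫ (α_ g s t).hom))
    (h3 : ∀ {y : K} {h k : a ⟶ y} (κ : h ⟶ s ≫ k),
          ((t ◁ ((s ◁ κ) ≫ (α_ s s k).inv ≫ (μ' ▷ k)))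
              ≫ (α_ t s k).inv ≫ (l ▷ k) ≫ (α_ s t k).hom
            = (α_ t s h).inv ≫ (l ▷ h) ≫ (α_ s t h).hom
              ≫ ((s ◁ ((t ◁ κ) ≫ (α_ t s k).inv ≫ (l ▷ k) ≫ (α_ s t k).hom))
                  ≫ (α_ s s (t ≫ k)).inv ≫ (μ' ▷ (t ≫ k))))) :
    ((μ ▷ s) ≫ l
          = (α_ t t s).hom ≫ (t ◁ l) ≫ (α_ t s t).inv ≫ (l ▷ t)
              ≫ (α_ s t t).hom ≫ (s ◁ μ)) ∧
    ((t ◁ μ') ≫ l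
          = (α_ t s s).inv ≫ (l ▷ s) ≫ (α_ s t s).hom ≫ (s ◁ l)
              ≫ (α_ s s t).inv ≫ (μ' ▷ t)) :=
  ⟨mul_left_compat_of_noIteration s t μ l h2, mul_right_compat_of_noIteration s t μ' l h3⟩

/-- A 2-cell `λ : st ⇒ ts` compatible with both units and satisfying conditions (2) and (3)
of a no-iteration distributive law is compatible with both multiplications:
`λ · sμ = μs · tλ · λt` and `λ · μ't = tμ' · λs · sλ`. -/
theorem stmt19 {K : Type u} [Bicategory.{w, v} K] [Bicategory.Strict K]
    {a : K} (s : a ⟶ a) (η' : 𝟙 a ⟶ s) (μ' : s ≫ s ⟶ s)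
    (t : a ⟶ a) (η : 𝟙 a ⟶ t) (μ : t ≫ t ⟶ t)
    (hη₁ : (λ_ s).inv ≫ (η' ▷ s) ≫ μ' = 𝟙 s)
    (hη₂ : (ρ_ s).inv ≫ (s ◁ η') ≫ μ' = 𝟙 s)
    (hμ'assoc : (μ' ▷ s) ≫ μ' = (α_ s s s).hom ≫ (s ◁ μ') ≫ μ')
    (hη₃ : (λ_ t).inv ≫ (η ▷ t) ≫ μ = 𝟙 t)
    (hη₄ : (ρ_ t).inv ≫ (t ◁ η) ≫ μ = 𝟙 t)
    (hμassoc : (μ ▷ t) ≫ μ = (α_ t t t).hom ≫ (t ◁ μ) ≫ μ)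
    (l : t ≫ s ⟶ s ≫ t)
    (hu : ((λ_ s).inv ≫ (η ▷ s) ≫ l = (ρ_ s).inv ≫ (s ◁ η)) ∧
        ((ρ_ t).inv ≫ (t ◁ η') ≫ l = (λ_ t).inv ≫ (η' ▷ t)))
    (h2 : ∀ {x : K} {f g : x ⟶ a} (θ : f ⟶ g ≫ t),
          ((((θ ▷ t) ≫ (α_ g t t).hom ≫ (g ◁ μ)) ▷ s) ≫ (α_ g t s).hom ≫ (g ◁ l)
            = (α_ f t s).hom ≫ (f ◁ l) ≫ (α_ f s t).inv
              ≫ ((((θ ▷ s) ≫ (α_ g t s).hom ≫ (g ◁ l) ≫ (α_ g s t).inv) ▷ t)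
                  ≫ (α_ (g ≫ s) t t).hom ≫ ((g ≫ s) ◁ μ))
              ≫ (α_ g s t).hom))
    (h3 : ∀ {y : K} {h k : a ⟶ y} (κ : h ⟶ s ≫ k),
          ((t ◁ ((s ◁ κ) ≫ (α_ s s k).inv ≫ (μ' ▷ k)))
              ≫ (α_ t s k).inv ≫ (l ▷ k) ≫ (α_ s t k).hom
            = (α_ t s h).inv ≫ (l ▷ h) ≫ (α_ s t h).hom
              ≫ ((s ◁ ((t ◁ κ) ≫ (α_ t s k).inv ≫ (l ▷ k) ≫ (α_ s t k).hom))
                  ≫ (α_ s s (t ≫ k)).inv ≫ (μ' ▷ (t ≫ k))))) :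
    ((μ ▷ s) ≫ l
          = (α_ t t s).hom ≫ (t ◁ l) ≫ (α_ t s t).inv ≫ (l ▷ t)
              ≫ (α_ s t t).hom ≫ (s ◁ μ)) ∧
    ((t ◁ μ') ≫ l
          = (α_ t s s).inv ≫ (l ▷ s) ≫ (α_ s t s).hom ≫ (s ◁ l)
              ≫ (α_ s s t).inv ≫ (μ' ▷ t)) :=
  stmt19_general s μ' t μ l h2 h3
end
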